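/- arXiv:2508.08021 — 4 statements merged into one kernel-verified Lean document; each statement's English description precedes it below -/
import Mathlib

section
/- On a weak almost contact metric structure (A, Q, ξ, η, g) on a real inner product space V (i.e., A skew-adjoint, Q self-adjoint positive, A² = -Q + η ⊗ ξ, g(Ax,Ay) = g(Qx,y) - η(x)η(y), Aξ = 0, Qξ = ξ, η(x) = g(x,ξ), g(ξ,ξ) = 1), the endomorphisms A and Q commute: A Q = Q A. -/
open RealInnerProductSpace

/-! Compute `A³x` in two ways: as `A (A² x) = -A (Q x)`, because `A ξ = 0`, and as
`A² (A x) = -Q (A x)`, because `η (A x) = -⟪x, A ξ⟫ = 0`. -/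

theorem LinearMap.apply_comm_of_apply_apply_eq_neg_add_smul {R M : Type*} [Ring R]
    [AddCommGroup M] [Module R M] (A Q : M →ₗ[R] M) (ξ : M) (η : M → R)
    (hA2 : ∀ x, A (A x) = -Q x + η x • ξ) (hAξ : A ξ = 0) (hηA : ∀ x, η (A x) = 0)
    (x : M) : A (Q x) = Q (A x) := by
  have h : A (A (A x)) = -A (Q x) := by
    rw [hA2 x, map_add, map_neg, map_smul, hAξ, smul_zero, add_zero]
  rw [← neg_inj, ← h, hA2 (A x), hηA, zero_smul, add_zero]

theorem stmt_6_general {V : Type*} [NormedAddCommGroup V] [InnerProductSpace ℝ V]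
    (A Q : V →ₗ[ℝ] V) (ξ : V) (η : V → ℝ)
    (hη : ∀ x, η x = ⟪x, ξ⟫)
    (hA : ∀ x y, ⟪A x, y⟫ = -⟪x, A y⟫)
    (hA2 : ∀ x, A (A x) = - Q x + η x • ξ)
    (hAξ : A ξ = 0) :
    ∀ x, A (Q x) = Q (A x) := by
  refine A.apply_comm_of_apply_apply_eq_neg_add_smul Q ξ η hA2 hAξ fun x => ?_
  rw [hη, hA, hAξ, inner_zero_right, neg_zero]

/-- on a weak almost contact metric structure `(A,Q,ξ,η,g)`
the endomorphisms `A` and `Q` commute. -/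
theorem stmt_6 {V : Type*} [NormedAddCommGroup V] [InnerProductSpace ℝ V]
    (A Q : V →ₗ[ℝ] V) (ξ : V) (η : V → ℝ)
    (hξ : ⟪ξ, ξ⟫ = 1)
    (hη : ∀ x, η x = ⟪x, ξ⟫)
    (hA : ∀ x y, ⟪A x, y⟫ = -⟪x, A y⟫)
    (hQ : ∀ x y, ⟪Q x, y⟫ = ⟪x, Q y⟫)
    (hQpos : ∀ x, x ≠ 0 → 0 < ⟪Q x, x⟫)
    (hA2 : ∀ x, A (A x) = - Q x + η x • ξ)
    (hAA : ∀ x y, ⟪A x, A y⟫ = ⟪Q x, y⟫ - η x * η y)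
    (hAξ : A ξ = 0)
    (hQξ : Q ξ = ξ) :
    ∀ x, A (Q x) = Q (A x) :=
  stmt_6_general A Q ξ η hη hA hA2 hAξ
end

section
/- Let ∇ be a linear connection with totally skew-symmetric torsion (0,3)-tensor T on a generalized Riemannian manifold (M, G = g + F), satisfying the Einstein metricity condition so that (∇_X g)(Y,Z) = -(1/6)[dF(X,Y,AZ) - dF(X,AY,Z)] and T = -(1/3) dF. Then ∇ satisfies the A-torsion condition T(AX,Y,Z) = T(X,AY,Z) if and only if ∇ g = 0. -/
/-!
Both `T` and `∇g` are nonzero multiples of expressions in `dF` alone, so the two conditions say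
`dF(AX,Y,Z) = dF(X,AY,Z)` and `dF(X,Y,AZ) = dF(X,AY,Z)` respectively. Since `dF` is alternating,
it is invariant under cyclic permutations, which turns each of these identities into the other.
-/

section ShiftAlongSkewForm

variable {V M : Type*} [AddCommGroup M]

theorem cyclic_of_antisymm {φ : V → V → V → M}
    (h₁₂ : ∀ X Y Z, φ X Y Z = -φ Y X Z) (h₂₃ : ∀ X Y Z, φ X Y Z = -φ X Z Y)
    (X Y Z : V) : φ X Y Z = φ Z X Y := by
  rw [h₂₃, h₁₂, neg_neg]

theorem shift_first_iff_shift_last {φ : V → V → V → M} (A : V → V)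
    (h₁₂ : ∀ X Y Z, φ X Y Z = -φ Y X Z) (h₂₃ : ∀ X Y Z, φ X Y Z = -φ X Z Y) :
    (∀ X Y Z, φ (A X) Y Z = φ X (A Y) Z) ↔ (∀ X Y Z, φ X Y (A Z) = φ X (A Y) Z) := by
  constructor
  · intro h X Y Z
    calc φ X Y (A Z) = φ (A Z) X Y := cyclic_of_antisymm h₁₂ h₂₃ X Y (A Z)
      _ = φ Z (A X) Y := h Z X Y
      _ = φ (A X) Y Z := (cyclic_of_antisymm h₁₂ h₂₃ (A X) Y Z).symm
      _ = φ X (A Y) Z := h X Y Z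
  · intro h X Y Z
    calc φ (A X) Y Z = -φ Y (A X) Z := h₁₂ _ _ _
      _ = -φ Y X (A Z) := by rw [h Y X Z]
      _ = φ X Y (A Z) := by rw [h₁₂ Y X, neg_neg]
      _ = φ X (A Y) Z := h X Y Z

end ShiftAlongSkewForm

theorem stmt_10_general {R V : Type*} [CommRing R] [Algebra ℝ R]
    [AddCommGroup V] [Module R V]
    (g : V →ₗ[R] V →ₗ[R] R) (D : V → R → R)
    (A : V → V) (dF T : V → V → V → R)
    (hdF1 : ∀ X Y Z, dF X Y Z = - dF Y X Z)
    (hdF2 : ∀ X Y Z, dF X Y Z = - dF X Z Y)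
    (hT : ∀ X Y Z, T X Y Z = -((1/3 : ℝ) • dF X Y Z))
    (cov : V → V → V)
    (hEMC : ∀ X Y Z, D X (g Y Z) - g (cov X Y) Z - g Y (cov X Z)
      = -((1/6 : ℝ) • (dF X Y (A Z) - dF X (A Y) Z))) :
    (∀ X Y Z, T (A X) Y Z = T X (A Y) Z) ↔
    (∀ X Y Z, D X (g Y Z) - g (cov X Y) Z - g Y (cov X Z) = 0) := by
  have torsion_iff : (∀ X Y Z, T (A X) Y Z = T X (A Y) Z) ↔
      ∀ X Y Z, dF (A X) Y Z = dF X (A Y) Z := by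
    simp only [hT, neg_inj, smul_right_inj (by norm_num : (1/3 : ℝ) ≠ 0)]
  have metric_iff : (∀ X Y Z, D X (g Y Z) - g (cov X Y) Z - g Y (cov X Z) = 0) ↔
      ∀ X Y Z, dF X Y (A Z) = dF X (A Y) Z := by
    simp only [hEMC, neg_eq_zero, smul_eq_zero, (by norm_num : (1/6 : ℝ) ≠ 0), false_or,
      sub_eq_zero]
  rw [torsion_iff, metric_iff]
  exact shift_first_iff_shift_last A hdF1 hdF2

/-- vector fields are modelled as a module `V` over the ring `R`
of smooth functions. For an Einstein connection `cov` with totally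
skew-symmetric torsion `T = -(1/3) dF` and covariant derivative of `g` given
by the EMC formula, the `A`-torsion condition `T(AX,Y,Z) = T(X,AY,Z)` holds
iff `∇ g = 0`. -/
theorem stmt_10 {R V : Type*} [CommRing R] [Algebra ℝ R]
    [AddCommGroup V] [Module R V]
    (g : V →ₗ[R] V →ₗ[R] R) (D : V → R → R)
    (A : V → V) (F : V → V → R) (dF T : V → V → V → R)
    (hAF : ∀ X Y, g (A X) Y = F X Y)
    (hAskew : ∀ X Y, g (A X) Y = - g X (A Y))
    (hdF1 : ∀ X Y Z, dF X Y Z = - dF Y X Z)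
    (hdF2 : ∀ X Y Z, dF X Y Z = - dF X Z Y)
    (hT : ∀ X Y Z, T X Y Z = -((1/3 : ℝ) • dF X Y Z))
    (cov : V → V → V)
    (hEMC : ∀ X Y Z, D X (g Y Z) - g (cov X Y) Z - g Y (cov X Z)
      = -((1/6 : ℝ) • (dF X Y (A Z) - dF X (A Y) Z))) :
    (∀ X Y Z, T (A X) Y Z = T X (A Y) Z) ↔
    (∀ X Y Z, D X (g Y Z) - g (cov X Y) Z - g Y (cov X Z) = 0) :=
  stmt_10_general g D A dF T hdF1 hdF2 hT cov hEMC
end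

section
/- Let V be a real inner product space, ξ a unit vector, η(x) = ⟨x,ξ⟩, A skew-adjoint with Aξ = 0, and Q self-adjoint positive-definite with Qξ = ξ and A² = -Q + η⊗ξ. If a bilinear form b on V satisfies b(x + Qx, Ay) = 0 for all x, y and b(ξ, y) = 0 for all y, then b(x, Ay) = 0 for all x, y; if moreover A has kernel spanned by ξ and b is skew-symmetric with b(·, ξ) = 0, then b = 0. -/
open RealInnerProductSpace

/-!
Since `Q` is positive, `1 + Q` is injective and hence, in finite dimension, surjective, so
`b(x + Qx, Ay) = 0` gives `b(x, Ay) = 0`. A skew-adjoint `A` has `(range A)ᗮ = ker A`, so every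
vector is `cξ + Az`; both summands are killed by `b(x, ·)`.
-/

section

variable {V : Type*} [NormedAddCommGroup V] [InnerProductSpace ℝ V]

theorem injective_id_add_of_inner_self_apply_nonneg {Q : V →ₗ[ℝ] V}
    (hQ : ∀ x, 0 ≤ ⟪Q x, x⟫) : Function.Injective (LinearMap.id + Q : V →ₗ[ℝ] V) := by
  rw [← LinearMap.ker_eq_bot, LinearMap.ker_eq_bot']
  intro x hx
  have hsum : ⟪x, x⟫ + ⟪Q x, x⟫ = 0 := by
    simpa only [LinearMap.add_apply, LinearMap.id_apply, inner_add_left, inner_zero_left]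
      using congrArg (⟪·, x⟫) hx
  have hxx : ⟪x, x⟫ = 0 := le_antisymm (by linarith [hQ x]) real_inner_self_nonneg
  exact inner_self_eq_zero.mp hxx

theorem orthogonal_range_of_skew {A : V →ₗ[ℝ] V} (hA : ∀ x y, ⟪A x, y⟫ = -⟪x, A y⟫) :
    (LinearMap.range A)ᗮ = LinearMap.ker A := by
  ext v
  simp only [Submodule.mem_orthogonal, LinearMap.mem_range, forall_exists_index,
    forall_apply_eq_imp_iff, LinearMap.mem_ker, hA, neg_eq_zero]
  exact ⟨fun h => ext_inner_left ℝ fun z => by simp [h z], fun h z => by simp [h]⟩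

theorem exists_mem_ker_add_apply_of_skew [FiniteDimensional ℝ V] {A : V →ₗ[ℝ] V}
    (hA : ∀ x y, ⟪A x, y⟫ = -⟪x, A y⟫) (v : V) :
    ∃ k ∈ LinearMap.ker A, ∃ z, v = k + A z := by
  obtain ⟨_, ⟨z, rfl⟩, k, hk, hv⟩ := (LinearMap.range A).exists_add_mem_mem_orthogonal v
  rw [orthogonal_range_of_skew hA] at hk
  exact ⟨k, hk, z, hv.trans (add_comm _ _)⟩

end

theorem stmt_18_general {V : Type*} [NormedAddCommGroup V] [InnerProductSpace ℝ V]
    [FiniteDimensional ℝ V]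
    (A Q : V →ₗ[ℝ] V) (ξ : V)
    (hA : ∀ x y, ⟪A x, y⟫ = -⟪x, A y⟫)
    (hQpos : ∀ x, x ≠ 0 → 0 < ⟪Q x, x⟫)
    (b : V →ₗ[ℝ] V →ₗ[ℝ] ℝ)
    (hb1 : ∀ x y, b (x + Q x) (A y) = 0) :
    (∀ x y, b x (A y) = 0) ∧
    (LinearMap.ker A = Submodule.span ℝ {ξ} →
      (∀ x y, b x y = - b y x) → (∀ x, b x ξ = 0) →
      ∀ x y, b x y = 0) := by
  have hQ : ∀ x, 0 ≤ ⟪Q x, x⟫ := fun x => by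
    rcases eq_or_ne x 0 with rfl | hx
    · simp
    · exact (hQpos x hx).le
  have hsurj : Function.Surjective (LinearMap.id + Q : V →ₗ[ℝ] V) :=
    LinearMap.surjective_of_injective (injective_id_add_of_inner_self_apply_nonneg hQ)
  have hbA : ∀ x y, b x (A y) = 0 := fun x y => by
    obtain ⟨w, rfl⟩ := hsurj x
    exact hb1 w y
  refine ⟨hbA, fun hker _ hbξ x y => ?_⟩
  obtain ⟨k, hk, z, rfl⟩ := exists_mem_ker_add_apply_of_skew hA y
  rw [hker, Submodule.mem_span_singleton] at hk
  obtain ⟨c, rfl⟩ := hk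
  simp [hbξ, hbA]

/-- on a weak almost contact metric structure, a bilinear form
`b` with `b(x+Qx, Ay) = 0` and `b(ξ,·) = 0` satisfies `b(·, A·) = 0`; if
moreover `ker A = span{ξ}` and `b` is skew-symmetric with `b(·,ξ) = 0`, then
`b = 0`. -/
theorem stmt_18 {V : Type*} [NormedAddCommGroup V] [InnerProductSpace ℝ V]
    [FiniteDimensional ℝ V]
    (A Q : V →ₗ[ℝ] V) (ξ : V) (η : V → ℝ)
    (hξ : ⟪ξ, ξ⟫ = 1)
    (hη : ∀ x, η x = ⟪x, ξ⟫)
    (hA : ∀ x y, ⟪A x, y⟫ = -⟪x, A y⟫)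
    (hAξ : A ξ = 0)
    (hQ : ∀ x y, ⟪Q x, y⟫ = ⟪x, Q y⟫)
    (hQpos : ∀ x, x ≠ 0 → 0 < ⟪Q x, x⟫)
    (hQξ : Q ξ = ξ)
    (hA2 : ∀ x, A (A x) = - Q x + η x • ξ)
    (b : V →ₗ[ℝ] V →ₗ[ℝ] ℝ)
    (hb1 : ∀ x y, b (x + Q x) (A y) = 0)
    (hb2 : ∀ y, b ξ y = 0) :
    (∀ x y, b x (A y) = 0) ∧
    (LinearMap.ker A = Submodule.span ℝ {ξ} →
      (∀ x y, b x y = - b y x) → (∀ x, b x ξ = 0) →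
      ∀ x y, b x y = 0) :=
  stmt_18_general A Q ξ hA hQpos b hb1
end

section
/- Let (M,g) be a Riemannian manifold, A a skew-adjoint (1,1)-tensor field with A² = -Q for Q self-adjoint positive-definite, and suppose ∇^g A satisfies (∇^g_X A)Y = -T(X,Y) for a totally skew-symmetric (1,2)-torsion-type tensor T satisfying T(AX,Y) = T(X,AY). Then ∇^g Q = 0, i.e., g((∇^g_X Q)Y, Z) = 0 for all vector fields X,Y,Z. -/
/-!
Differentiating `Q = -A²` gives `(∇_X Q) Y = T(X, A Y) + A T(X, Y)`. Skew-adjointness of `A`,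
skew-symmetry of `T` in its last two slots and the `A`-torsion condition give
`g(T(X,Y), AZ) = g(T(X,AY), Z)`, so the two terms cancel against `g`.

Since neither `A`, `T` nor `∇_X` is assumed additive, all computations happen under `g`; in
particular `∇_X` is odd only under `g`, by metric compatibility and invertibility of `2`.
-/

lemma eq_zero_of_add_self_eq_zero_of_module_real {M : Type*} [AddCommGroup M] [Module ℝ M] {x : M}
    (h : x + x = 0) : x = 0 := by
  have h2 : (2 : ℝ) • x = 0 := by rwa [two_smul]
  simpa using h2

section

variable {R V : Type*} [CommRing R] [AddCommGroup V] [Module R V] (g : V →ₗ[R] V →ₗ[R] R)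

lemma apply_covg_neg_eq_neg [Algebra ℝ R] (D : V → R → R) (covg : V → V → V)
    (hmc : ∀ X Y Z, D X (g Y Z) = g (covg X Y) Z + g Y (covg X Z)) (X W Z : V) :
    g (covg X (-W)) Z = -g (covg X W) Z := by
  have hA : g (covg X (-W)) Z + g (-W) (covg X Z) = g (covg X W) (-Z) + g W (covg X (-Z)) := by
    rw [← hmc, ← hmc, map_neg, LinearMap.neg_apply, map_neg]
  have hB : g (covg X (-W)) (-Z) + g (-W) (covg X (-Z)) = g (covg X W) Z + g W (covg X Z) := by
    rw [← hmc, ← hmc, map_neg, map_neg, LinearMap.neg_apply, neg_neg]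
  simp only [map_neg, LinearMap.neg_apply] at hA hB
  refine eq_neg_of_add_eq_zero_left (eq_zero_of_add_self_eq_zero_of_module_real ?_)
  linear_combination hA - hB

variable {g} {A : V → V}

lemma apply_comp_self_of_skew (hAskew : ∀ X Y, g (A X) Y = -g X (A Y)) (X Y : V) :
    g X (A (A Y)) = g (A (A X)) Y := by
  rw [hAskew, hAskew, neg_neg]

lemma apply_torsion_skew_right {T : V → V → V}
    (hTskew2 : ∀ X Y Z, g (T X Y) Z = -g (T X Z) Y)
    (hAt : ∀ X Y Z, g (T (A X) Y) Z = g (T X (A Y)) Z) (X Y Z : V) :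
    g (T X Y) (A Z) = g (T X (A Y)) Z := by
  calc g (T X Y) (A Z) = -g (T X (A Z)) Y := hTskew2 X Y (A Z)
    _ = -g (T (A X) Z) Y := by rw [hAt]
    _ = g (T (A X) Y) Z := (hTskew2 (A X) Y Z).symm
    _ = g (T X (A Y)) Z := hAt X Y Z

lemma apply_covg_comp_self {covg : V → V → V} {T : V → V → V}
    (hAskew : ∀ X Y, g (A X) Y = -g X (A Y))
    (hTskew2 : ∀ X Y Z, g (T X Y) Z = -g (T X Z) Y)
    (hAt : ∀ X Y Z, g (T (A X) Y) Z = g (T X (A Y)) Z)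
    (hnablaA : ∀ X Y, covg X (A Y) - A (covg X Y) = -T X Y) (X Y Z : V) :
    g (covg X (A (A Y))) Z = g (A (A (covg X Y))) Z := by
  have hcovgA : ∀ Y, covg X (A Y) = -T X Y + A (covg X Y) := fun Y ↦
    sub_eq_iff_eq_add.mp (hnablaA X Y)
  have hstep : ∀ Y W, g (covg X (A Y)) W = -g (T X Y) W - g (covg X Y) (A W) := fun Y W ↦ by
    rw [hcovgA, map_add, map_neg, LinearMap.add_apply, LinearMap.neg_apply, hAskew, sub_eq_add_neg]
  rw [hstep, hstep, apply_torsion_skew_right hTskew2 hAt, apply_comp_self_of_skew hAskew]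
  ring

end

theorem stmt_19_general {R V : Type*} [CommRing R] [Algebra ℝ R]
    [AddCommGroup V] [Module R V]
    (g : V →ₗ[R] V →ₗ[R] R) (D : V → R → R)
    (covg : V → V → V)
    (hmc : ∀ X Y Z, D X (g Y Z) = g (covg X Y) Z + g Y (covg X Z))
    (A Q : V → V) (T : V → V → V)
    (hAskew : ∀ X Y, g (A X) Y = - g X (A Y))
    (hQdef : ∀ X, Q X = -(A (A X)))
    (hTskew2 : ∀ X Y Z, g (T X Y) Z = - g (T X Z) Y)
    (hAt : ∀ X Y Z, g (T (A X) Y) Z = g (T X (A Y)) Z)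
    (hnablaA : ∀ X Y, covg X (A Y) - A (covg X Y) = - T X Y) :
    ∀ X Y Z, g (covg X (Q Y) - Q (covg X Y)) Z = 0 := by
  intro X Y Z
  rw [map_sub, LinearMap.sub_apply, hQdef, hQdef, apply_covg_neg_eq_neg g D covg hmc,
    apply_covg_comp_self hAskew hTskew2 hAt hnablaA, map_neg, LinearMap.neg_apply]
  ring

/-- vector fields are modelled as a module `V` over the ring `R`
of smooth functions, `covg` the Levi-Civita connection. If `A` is skew-adjoint
with `Q = -A²`, and `(∇^g_X A)Y = -T(X,Y)` for a totally skew-symmetric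
torsion-type tensor `T` satisfying the `A`-torsion condition, then
`∇^g Q = 0`. -/
theorem stmt_19 {R V : Type*} [CommRing R] [Algebra ℝ R]
    [AddCommGroup V] [Module R V]
    (g : V →ₗ[R] V →ₗ[R] R) (D : V → R → R) (lie : V → V → V)
    (covg : V → V → V)
    (hmc : ∀ X Y Z, D X (g Y Z) = g (covg X Y) Z + g Y (covg X Z))
    (htf : ∀ X Y, covg X Y - covg Y X = lie X Y)
    (A Q : V → V) (T : V → V → V)
    (hAskew : ∀ X Y, g (A X) Y = - g X (A Y))
    (hQdef : ∀ X, Q X = -(A (A X)))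
    (hQsa : ∀ X Y, g (Q X) Y = g X (Q Y))
    (hTskew1 : ∀ X Y Z, g (T X Y) Z = - g (T Y X) Z)
    (hTskew2 : ∀ X Y Z, g (T X Y) Z = - g (T X Z) Y)
    (hAt : ∀ X Y Z, g (T (A X) Y) Z = g (T X (A Y)) Z)
    (hnablaA : ∀ X Y, covg X (A Y) - A (covg X Y) = - T X Y) :
    ∀ X Y Z, g (covg X (Q Y) - Q (covg X Y)) Z = 0 :=
  stmt_19_general g D covg hmc A Q T hAskew hQdef hTskew2 hAt hnablaA
end
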